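/- arXiv:1807.11896 — 2 statements merged into one kernel-verified Lean document; each statement's English description precedes it below -/
import Mathlib

section
/- Suppose κ is weakly inaccessible and λ ≥ κ. Let A = {x ∈ P_κλ : x ∩ κ is an uncountable cardinal of cofinality ω}. Then A is a stationary subset of P_κλ (i.e., A meets every club subset of P_κλ). -/
universe u

open Cardinal FirstOrder

noncomputable section

namespace TwoCardinalWC

/-! ### Basic two-cardinal combinatorics in the ZFC universe `ZFSet` -/

/-- The cardinality of a ZF-set. -/
def cardZ (x : ZFSet.{u}) : Cardinal.{u + 1} := #x.toSet

/-- `x` is a von Neumann ordinal: a transitive set of transitive sets. -/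
def IsOrd (x : ZFSet.{u}) : Prop := x.IsTransitive ∧ ∀ y ∈ x.toSet, ZFSet.IsTransitive y

/-- `x` is a (von Neumann) cardinal: an ordinal not equinumerous to any of its members. -/
def IsCardZ (x : ZFSet.{u}) : Prop := IsOrd x ∧ ∀ y ∈ x.toSet, cardZ y < cardZ x

/-- `x` is an inaccessible cardinal. -/
def InaccZ (x : ZFSet.{u}) : Prop := IsCardZ x ∧ (cardZ x).IsInaccessible

/-- `x` is a weakly inaccessible cardinal: an uncountable regular limit cardinal. -/
def WeaklyInaccZ (x : ZFSet.{u}) : Prop :=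
  IsCardZ x ∧ (cardZ x).IsRegular ∧ ℵ₀ < cardZ x ∧
    ∀ d : Cardinal.{u + 1}, d < cardZ x → Order.succ d < cardZ x

/-- `κZ` is a Mahlo cardinal: inaccessible, and every club in `κZ` contains a regular cardinal. -/
def MahloZ (κZ : ZFSet.{u}) : Prop :=
  InaccZ κZ ∧ ∀ C : Set ZFSet.{u}, C ⊆ κZ.toSet →
    (∀ a ∈ κZ.toSet, ∃ b ∈ C, a ∈ b ∨ a = b) →
    (∀ b ∈ κZ.toSet, b ≠ ∅ → (∀ a ∈ b.toSet, ∃ c ∈ C, (a ∈ c ∨ a = c) ∧ c ∈ b) → b ∈ C) →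
    ∃ b ∈ C, IsCardZ b ∧ (cardZ b).IsRegular

/-- `P_μ(s)`: the collection of subsets of the ZF-set `s` of cardinality `< μ`. -/
def Plt (μ : Cardinal.{u + 1}) (s : ZFSet.{u}) : Set ZFSet.{u} := {y | y ⊆ s ∧ cardZ y < μ}

/-- `P_κ λ` as a collection of ZF-sets. -/
def PKL (κZ lamZ : ZFSet.{u}) : Set ZFSet.{u} := Plt (cardZ κZ) lamZ

/-- `P_κ λ` as a single ZF-set. -/
def PKLz (κZ lamZ : ZFSet.{u}) : ZFSet.{u} :=
  ZFSet.sep (fun y => cardZ y < cardZ κZ) (ZFSet.powerset lamZ)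

/-- `κ_x = |x ∩ κ|`. -/
def kap (κZ x : ZFSet.{u}) : Cardinal.{u + 1} := cardZ (x ∩ κZ)

/-- `P_{κ_x} x`: subsets of `x` of cardinality `< κ_x`. -/
def Psub (κZ x : ZFSet.{u}) : Set ZFSet.{u} := Plt (kap κZ x) x

/-- The weak club `C_f = {x ∈ P_κλ : f[P_{κ_x}x] ⊆ P_{κ_x}x}`. -/
def weakClub (κZ lamZ : ZFSet.{u}) (f : ZFSet.{u} → ZFSet.{u}) : Set ZFSet.{u} :=
  {x | x ∈ PKL κZ lamZ ∧ ∀ y ∈ Psub κZ x, f y ∈ Psub κZ x}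

/-- `S` is strongly stationary in `P_κλ`: it meets every weak club. -/
def stronglyStat (κZ lamZ : ZFSet.{u}) (S : Set ZFSet.{u}) : Prop :=
  ∀ f : ZFSet.{u} → ZFSet.{u}, (S ∩ weakClub κZ lamZ f).Nonempty

/-- `C` is `1`-closed: whenever `κ_x` is inaccessible and `C ∩ P_{κ_x}x` is
strongly stationary in `P_{κ_x}x`, then `x ∈ C`. -/
def oneClosed (κZ lamZ : ZFSet.{u}) (C : Set ZFSet.{u}) : Prop :=
  ∀ x ∈ PKL κZ lamZ, (kap κZ x).IsInaccessible →
    stronglyStat (x ∩ κZ) x (C ∩ Psub κZ x) → x ∈ C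

/-- `C ⊆ P_κλ` is `1`-club: strongly stationary and `1`-closed. -/
def oneClub (κZ lamZ : ZFSet.{u}) (C : Set ZFSet.{u}) : Prop :=
  C ⊆ PKL κZ lamZ ∧ stronglyStat κZ lamZ C ∧ oneClosed κZ lamZ C

/-- The image `f''x` of a ZF-set under an arbitrary (class) function. -/
def imgZ (f : ZFSet.{u} → ZFSet.{u}) (x : ZFSet.{u}) : ZFSet.{u} :=
  @ZFSet.image f (Classical.allZFSetDefinable _) x

/-! ### The language of set theory and elementarity -/

/-- Relation symbols: one binary relation (membership). -/
def memRel : ℕ → Type (u + 1)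
  | 2 => PUnit
  | _ => PEmpty

/-- The language of set theory: a single binary relation `∈`. -/
def Lmem : FirstOrder.Language.{u + 1, u + 1} := ⟨fun _ => PEmpty, memRel⟩

/-- The `∈`-structure on a collection of ZF-sets. -/
def memStruct (W : Set ZFSet.{u}) : Lmem.{u}.Structure ↥W where
  funMap := fun e _ => e.elim
  RelMap := fun {n} r v =>
    match n, r, v with
    | 0, r, _ => r.elim
    | 1, r, _ => r.elim
    | 2, _, v => ((v 0 : ZFSet.{u}) ∈ (v 1 : ZFSet.{u}))
    | (_ + 3), r, _ => r.elim

/-- Realization of an `∈`-formula in `(W, ∈)`. -/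
def RealizeMem (W : Set ZFSet.{u}) {n : ℕ} (φ : Lmem.{u}.BoundedFormula Empty n)
    (w : Fin n → ↥W) : Prop :=
  letI := memStruct W
  φ.Realize (fun e => e.elim) w

/-- `j` is an elementary embedding from `(Ms, ∈)` into `(Ns, ∈)`. -/
def IsElemEmb (Ms Ns : Set ZFSet.{u}) (j : ZFSet.{u} → ZFSet.{u}) : Prop :=
  ∃ h : ∀ a ∈ Ms, j a ∈ Ns,
    ∀ (n : ℕ) (φ : Lmem.{u}.BoundedFormula Empty n) (w : Fin n → ↥Ms),
      RealizeMem Ms φ w ↔ RealizeMem Ns φ (fun i => ⟨j ((w i : ZFSet.{u})), h _ (w i).2⟩)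

/-- A predicate on ZF-sets is definable over `Mz` (with parameters from `Mz`). -/
def DefinableOver (Mz : ZFSet.{u}) (p : ZFSet.{u} → Prop) : Prop :=
  ∃ (n : ℕ) (φ : Lmem.{u}.BoundedFormula Empty (n + 1)) (v : Fin n → ↥Mz.toSet),
    ∀ (a : ZFSet.{u}) (ha : a ∈ Mz.toSet), p a ↔ RealizeMem Mz.toSet φ (Fin.snoc v ⟨a, ha⟩)

/-- A class function is definable over `Mz` (with parameters from `Mz`). -/
def DefinableFunOver (Mz : ZFSet.{u}) (f : ZFSet.{u} → ZFSet.{u}) : Prop :=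
  (∀ a, a ∈ Mz → f a ∈ Mz) ∧
  ∃ (n : ℕ) (φ : Lmem.{u}.BoundedFormula Empty (n + 2)) (v : Fin n → ↥Mz.toSet),
    ∀ (a : ZFSet.{u}) (ha : a ∈ Mz.toSet) (b : ZFSet.{u}) (hb : b ∈ Mz.toSet),
      f a = b ↔ RealizeMem Mz.toSet φ (Fin.snoc (Fin.snoc v ⟨a, ha⟩) ⟨b, hb⟩)

/-- `Mz` is a transitive model of `ZFC⁻`: transitive and closed under the
`ZFC⁻` operations (pairing, union, infinity, definable separation and replacement). -/
def SatZFCminus (Mz : ZFSet.{u}) : Prop :=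
  Mz.IsTransitive ∧ ZFSet.omega ∈ Mz ∧
  (∀ a, a ∈ Mz → ∀ b, b ∈ Mz → ({a, b} : ZFSet.{u}) ∈ Mz) ∧
  (∀ a, a ∈ Mz → ZFSet.sUnion a ∈ Mz) ∧
  (∀ p : ZFSet.{u} → Prop, DefinableOver Mz p → ∀ a, a ∈ Mz → ZFSet.sep p a ∈ Mz) ∧
  (∀ f : ZFSet.{u} → ZFSet.{u}, DefinableFunOver Mz f → ∀ a, a ∈ Mz → imgZ f a ∈ Mz)

/-- `W ⊆ P_κλ` is weakly compact: for every `A ⊆ λ` there are a transitive model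
`M ⊨ ZFC⁻` with `λ, A, W ∈ M`, closed under `<κ`-sized subsets, a transitive `N` and an
elementary embedding `j : M → N` with critical point `κ`, `j(κ) > λ` and `j''λ ∈ j(W)`. -/
def IsWC (κZ lamZ W : ZFSet.{u}) : Prop :=
  W ⊆ PKLz κZ lamZ ∧
  ∀ A : ZFSet.{u}, A ⊆ lamZ →
    ∃ (Mz Nz : ZFSet.{u}) (j : ZFSet.{u} → ZFSet.{u}),
      SatZFCminus Mz ∧ Nz.IsTransitive ∧
      lamZ ∈ Mz ∧ A ∈ Mz ∧ W ∈ Mz ∧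
      (∀ s : ZFSet.{u}, s.toSet ⊆ Mz.toSet → cardZ s < cardZ κZ → s ∈ Mz) ∧
      IsElemEmb Mz.toSet Nz.toSet j ∧
      (∀ a, a ∈ κZ → j a = a) ∧ j κZ ≠ κZ ∧
      lamZ ∈ j κZ ∧ imgZ j lamZ ∈ j W

/-! ### The two-cardinal cumulative hierarchy -/

/-- Baumgartner's hierarchy `V_α(δ, A)`:
`V_0 = A`, `V_{α+1} = P_δ(V_α) ∪ V_α`, unions at limits. -/
def Vh (δ : Cardinal.{u + 1}) (A : Set ZFSet.{u}) (α : Ordinal.{u + 1}) : Set ZFSet.{u} :=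
  Ordinal.limitRecOn α A (fun _ ih => {y | y.toSet ⊆ ih ∧ cardZ y < δ} ∪ ih)
    (fun o _ ih => {s | ∃ β, ∃ h : β < o, s ∈ ih β h})

/-- The usual von Neumann hierarchy, as a collection of ZF-sets. -/
def VN (α : Ordinal.{u + 1}) : Set ZFSet.{u} :=
  Ordinal.limitRecOn α (∅ : Set ZFSet.{u}) (fun _ ih => {y | y.toSet ⊆ ih})
    (fun o _ ih => {s | ∃ β, ∃ h : β < o, s ∈ ih β h})

/-! ### The language with `∈` and a unary predicate `R` -/

/-- Relation symbols: a unary predicate and a binary relation. -/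
def lrRel : ℕ → Type (u + 1)
  | 1 => PUnit
  | 2 => PUnit
  | _ => PEmpty

/-- The language with membership and one unary predicate. -/
def LR : FirstOrder.Language.{u + 1, u + 1} := ⟨fun _ => PEmpty, lrRel⟩

/-- The structure `(W, ∈, R)`. -/
def rStruct (W R : Set ZFSet.{u}) : LR.{u}.Structure ↥W where
  funMap := fun e _ => e.elim
  RelMap := fun {n} r v =>
    match n, r, v with
    | 0, r, _ => r.elim
    | 1, _, v => ((v 0 : ZFSet.{u}) ∈ R)
    | 2, _, v => ((v 0 : ZFSet.{u}) ∈ (v 1 : ZFSet.{u}))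
    | (_ + 3), r, _ => r.elim

/-- Realization of an `LR`-formula in `(W, ∈, R)`. -/
def RealizeR (W R : Set ZFSet.{u}) {n : ℕ} (φ : LR.{u}.BoundedFormula Empty n)
    (w : Fin n → ↥W) : Prop :=
  letI := rStruct W R
  φ.Realize (fun e => e.elim) w

/-- Satisfaction of a first-order sentence in `(W, ∈, R)`. -/
def SatR (W R : Set ZFSet.{u}) (φ : LR.{u}.Sentence) : Prop :=
  RealizeR W R φ (fun i => i.elim0)

/-- `(W₁, ∈, R ∩ W₁)` is an elementary substructure of `(W₂, ∈, R)`. -/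
def ElemSubR (W₁ W₂ R : Set ZFSet.{u}) : Prop :=
  ∃ h : W₁ ⊆ W₂,
    ∀ (n : ℕ) (φ : LR.{u}.BoundedFormula Empty n) (w : Fin n → ↥W₁),
      RealizeR W₁ (R ∩ W₁) φ w ↔ RealizeR W₂ R φ (fun i => ⟨(w i : ZFSet.{u}), h (w i).2⟩)


/-- `C` is a club subset of `P_κλ`: cofinal in `(P_κλ, ⊆)` and closed under unions of
`⊆`-increasing chains of length less than `κ`. -/
def chainClub (κZ lamZ : ZFSet.{u}) (C : Set ZFSet.{u}) : Prop :=
  C ⊆ PKL κZ lamZ ∧ (∀ x ∈ PKL κZ lamZ, ∃ y ∈ C, x ⊆ y) ∧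
  ∀ η : Ordinal.{u + 1}, η ≠ 0 → η < (cardZ κZ).ord →
    ∀ g : Ordinal.{u + 1} → ZFSet.{u},
      (∀ β, β < η → g β ∈ C) →
      (∀ β₁ β₂, β₁ < β₂ → β₂ < η → g β₁ ⊆ g β₂) →
      ZFSet.sep (fun t => ∃ β, ∃ _ : β < η, t ∈ g β) lamZ ∈ C

/-- `s` is an uncountable cardinal of cofinality `ω`. -/
def UncountableCardCofOmega (s : ZFSet.{u}) : Prop :=
  IsCardZ s ∧ ℵ₀ < cardZ s ∧
  ∃ g : ℕ → ZFSet.{u}, (∀ n, g n ∈ s) ∧ ∀ t, t ∈ s → ∃ n, t ∈ g n ∨ t = g n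

/-!
Starting anywhere in the club, alternate two moves: cover `x_n ∩ κ` by an uncountable cardinal
`ν_n < κ` (possible because `κ` is regular and a limit cardinal), then go back into the club above
`x_n ∪ ν_n ∪ {ν_n}`. The union `X` of this ω-chain lies in the club, and `X ∩ κ = ⋃ ν_n` is the
union of a strictly increasing ω-sequence of uncountable cardinals, hence an uncountable cardinal
of cofinality `ω`.
-/

open ZFSet

section

variable {s x y κZ : ZFSet.{u}}

theorem cardZ_eq_lift_card (x : ZFSet.{u}) : cardZ x = lift.{u + 1} x.card :=
  cardinalMk_coe_sort

theorem cardZ_mono (h : x ⊆ y) : cardZ x ≤ cardZ y := by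
  simpa only [cardZ_eq_lift_card, lift_le] using card_mono h

theorem isOrd_iff_isOrdinal : IsOrd x ↔ x.IsOrdinal :=
  isOrdinal_iff_forall_mem_isTransitive.symm

theorem mem_of_cardZ_lt (hx : x.IsOrdinal) (hy : y.IsOrdinal)
    (h : cardZ x < cardZ y) : x ∈ y :=
  (hx.mem_or_subset hy).resolve_right fun hyx => (cardZ_mono hyx).not_gt h

theorem cardZ_toZFSet_ord (d : Cardinal.{u}) : cardZ d.ord.toZFSet = lift.{u + 1} d := by
  rw [cardZ_eq_lift_card, Ordinal.card_toZFSet, card_ord]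

theorem isCardZ_toZFSet_ord (d : Cardinal.{u}) : IsCardZ d.ord.toZFSet := by
  refine ⟨isOrd_iff_isOrdinal.2 (isOrdinal_toZFSet _), fun y hy => ?_⟩
  obtain ⟨a, ha, rfl⟩ := Ordinal.mem_toZFSet_iff.1 hy
  rw [cardZ_eq_lift_card, Ordinal.card_toZFSet, cardZ_toZFSet_ord, lift_lt]
  exact lt_ord.1 ha

theorem IsCardZ.of_forall_mem (h : ∀ t ∈ s, ∃ c, IsCardZ c ∧ c ⊆ s ∧ t ∈ c) : IsCardZ s := by
  refine ⟨⟨fun t ht t' ht' => ?_, fun t ht => ?_⟩, fun t ht => ?_⟩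
  · obtain ⟨c, hc, hcs, htc⟩ := h t ht
    exact hcs (hc.1.1 t htc ht')
  · obtain ⟨c, hc, -, htc⟩ := h t ht
    exact hc.1.2 t htc
  · obtain ⟨c, hc, hcs, htc⟩ := h t ht
    exact (hc.2 t htc).trans_le (cardZ_mono hcs)

theorem cardZ_sUnion_lt {κ : Cardinal.{u + 1}} (hκ : κ.IsRegular) (hcard : cardZ s < κ)
    (h : ∀ t ∈ s, cardZ t < κ) : cardZ (⋃₀ s) < κ := by
  have hcoe : (⋃₀ s).toSet = ⋃ t ∈ s.toSet, t.toSet := by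
    ext t; simp only [Set.mem_iUnion, exists_prop]; exact mem_sUnion
  rw [cardZ, hcoe]
  exact (card_biUnion_lt_iff_forall_of_isRegular hκ hcard).2 h

theorem cardZ_union_le (x y : ZFSet.{u}) : cardZ (x ∪ y) ≤ cardZ x + cardZ y := by
  simpa only [cardZ_eq_lift_card, ← lift_add, lift_le] using card_union_le

theorem cardZ_insert_le (a x : ZFSet.{u}) : cardZ (insert a x) ≤ cardZ x + 1 := by
  rw [cardZ_eq_lift_card, cardZ_eq_lift_card, ← lift_one.{u, u + 1}, ← lift_add, lift_le]
  exact card_insert_le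

theorem exists_uncountable_cardZ_superset (hκ : WeaklyInaccZ κZ) (hy : y ⊆ κZ)
    (hcard : cardZ y < cardZ κZ) : ∃ ν ∈ κZ, IsCardZ ν ∧ ℵ₀ < cardZ ν ∧ y ⊆ ν := by
  obtain ⟨⟨hκord, hκcard⟩, hreg, hℵ, hlim⟩ := hκ
  rw [isOrd_iff_isOrdinal] at hκord
  have hU : cardZ (⋃₀ y) < cardZ κZ :=
    cardZ_sUnion_lt hreg hcard fun t ht => hκcard t (hy ht)
  -- `ν = (max ℵ₀ |⋃ y|)⁺` bounds every ordinal in `y`, and is below `κ` because `κ` is a limit.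
  set d := Order.succ (max ℵ₀ (⋃₀ y).card)
  have hd : lift.{u + 1} d < cardZ κZ := by
    rw [lift_succ, lift_max, lift_aleph0, ← cardZ_eq_lift_card]
    exact hlim _ (max_lt hℵ hU)
  have hdU : cardZ (⋃₀ y) < lift.{u + 1} d := by
    rw [cardZ_eq_lift_card, lift_lt]
    exact (le_max_right _ _).trans_lt (Order.lt_succ _)
  have hνord := isOrdinal_toZFSet d.ord
  refine ⟨d.ord.toZFSet, mem_of_cardZ_lt hνord hκord (by rwa [cardZ_toZFSet_ord]),
    isCardZ_toZFSet_ord d, ?_, fun t ht => ?_⟩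
  · rw [cardZ_toZFSet_ord, ← lift_aleph0.{u + 1, u}, lift_lt]
    exact (le_max_left _ _).trans_lt (Order.lt_succ _)
  · refine mem_of_cardZ_lt (hκord.mem (hy ht)) hνord ?_
    rw [cardZ_toZFSet_ord]
    exact (cardZ_mono fun _ h => mem_sUnion_of_mem h ht).trans_lt hdU

theorem union_mem_Plt {μ : Cardinal.{u + 1}} (hμ : ℵ₀ ≤ μ) (hx : x ∈ Plt μ s) (hy : y ∈ Plt μ s) :
    x ∪ y ∈ Plt μ s :=
  ⟨fun _ ht => (mem_union.1 ht).elim (fun h => hx.1 h) (fun h => hy.1 h),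
    (cardZ_union_le x y).trans_lt (add_lt_of_lt hμ hx.2 hy.2)⟩

theorem insert_mem_Plt {μ : Cardinal.{u + 1}} {a : ZFSet.{u}} (hμ : ℵ₀ ≤ μ) (ha : a ∈ s)
    (hx : x ∈ Plt μ s) : insert a x ∈ Plt μ s :=
  ⟨fun _ ht => (mem_insert_iff.1 ht).elim (fun h => h ▸ ha) (fun h => hx.1 h),
    (cardZ_insert_le a x).trans_lt (add_lt_of_lt hμ hx.2 (one_lt_aleph0.trans_le hμ))⟩

theorem chainClub.sep_mem_of_monotone {lamZ : ZFSet.{u}} {C : Set ZFSet.{u}}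
    (hC : chainClub κZ lamZ C) (hℵ : ℵ₀ < cardZ κZ) {x : ℕ → ZFSet.{u}} (hxC : ∀ n, x n ∈ C)
    (hx : Monotone x) : ZFSet.sep (fun t => ∃ n, t ∈ x n) lamZ ∈ C := by
  have hω : Ordinal.omega0 < (cardZ κZ).ord := by rwa [lt_ord, Ordinal.card_omega0]
  have hg : ∀ n : ℕ, x (toNat (n : Ordinal.{u + 1}).card) = x n := by simp
  convert hC.2.2 _ Ordinal.omega0_ne_zero hω (fun β => x (toNat β.card)) ?_ ?_ using 3 with t
  · refine ⟨fun ⟨n, hn⟩ => ⟨n, Ordinal.natCast_lt_omega0 n, (hg n).symm ▸ hn⟩, ?_⟩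
    rintro ⟨β, hβ, ht⟩
    obtain ⟨n, rfl⟩ := Ordinal.lt_omega0.1 hβ
    exact ⟨n, hg n ▸ ht⟩
  · intro β hβ
    obtain ⟨n, rfl⟩ := Ordinal.lt_omega0.1 hβ
    exact hg n ▸ hxC n
  · intro β₁ β₂ h₁₂ h₂
    obtain ⟨n₂, rfl⟩ := Ordinal.lt_omega0.1 h₂
    obtain ⟨n₁, rfl⟩ := Ordinal.lt_omega0.1 (h₁₂.trans h₂)
    rw [hg, hg]
    exact hx (Nat.cast_lt.1 h₁₂).le

theorem uncountableCardCofOmega_of_cardinal_seq (μ : ℕ → ZFSet.{u}) (hμ : ∀ n, IsCardZ (μ n))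
    (hℵ : ℵ₀ < cardZ (μ 0)) (hμs : ∀ n, μ n ∈ s ∧ μ n ⊆ s) (hs : ∀ t ∈ s, ∃ n, t ∈ μ n) :
    UncountableCardCofOmega s := by
  refine ⟨IsCardZ.of_forall_mem fun t ht => ?_, hℵ.trans_le (cardZ_mono (hμs 0).2),
    μ, fun n => (hμs n).1, fun t ht => (hs t ht).imp fun _ => Or.inl⟩
  obtain ⟨n, hn⟩ := hs t ht
  exact ⟨μ n, hμ n, (hμs n).2, hn⟩

theorem chainClub.exists_cardZ_mem_superset {lamZ : ZFSet.{u}} {C : Set ZFSet.{u}}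
    (hC : chainClub κZ lamZ C) (hκ : WeaklyInaccZ κZ) (hκlam : κZ ⊆ lamZ) (hx : x ∈ C) :
    ∃ ν ∈ κZ, IsCardZ ν ∧ ℵ₀ < cardZ ν ∧ x ∩ κZ ⊆ ν ∧ ∃ x' ∈ C, x ⊆ x' ∧ ν ∈ x' ∧ ν ⊆ x' := by
  have hxP := hC.1 hx
  obtain ⟨ν, hνκ, hν, hνℵ, hxν⟩ := exists_uncountable_cardZ_superset hκ
    (fun _ ht => (mem_inter.1 ht).2) ((cardZ_mono fun _ ht => (mem_inter.1 ht).1).trans_lt hxP.2)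
  have hνP : ν ∈ PKL κZ lamZ := ⟨fun _ ht => hκlam (hκ.1.1.1 ν hνκ ht), hκ.1.2 ν hνκ⟩
  have hℵ := hκ.2.2.1.le
  obtain ⟨x', hx'C, hx'⟩ :=
    hC.2.1 _ (insert_mem_Plt hℵ (hκlam hνκ) (union_mem_Plt hℵ hxP hνP))
  exact ⟨ν, hνκ, hν, hνℵ, hxν, x', hx'C,
    fun _ ht => hx' (mem_insert_of_mem _ (mem_union.2 (Or.inl ht))), hx' (mem_insert _ _),
    fun _ ht => hx' (mem_insert_of_mem _ (mem_union.2 (Or.inr ht)))⟩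

end

theorem cofinality_omega_set_stationary_general (κZ lamZ : ZFSet.{u})
    (hκ : WeaklyInaccZ κZ) (hκlam : κZ ⊆ lamZ) :
    ∀ C : Set ZFSet.{u}, chainClub κZ lamZ C →
      ({x | x ∈ PKL κZ lamZ ∧ UncountableCardCofOmega (x ∩ κZ)} ∩ C).Nonempty := by
  intro C hC
  have hℵ : ℵ₀ < cardZ κZ := hκ.2.2.1
  have hemptyP : ∅ ∈ PKL κZ lamZ := ⟨empty_subset _, by
    rw [cardZ_eq_lift_card, card_empty, lift_zero]; exact aleph0_pos.trans hℵ⟩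
  obtain ⟨x₀, hx₀C, -⟩ := hC.2.1 ∅ hemptyP
  choose! ν hνκ hν hνℵ hxν next hnextC hxnext hνmem hνsub using
    fun x (hx : x ∈ C) => hC.exists_cardZ_mem_superset hκ hκlam hx
  set xs : ℕ → ZFSet.{u} := fun n => next^[n] x₀
  have hxs_succ (n : ℕ) : xs (n + 1) = next (xs n) := Function.iterate_succ_apply' next n x₀
  have hxsC (n : ℕ) : xs n ∈ C := by
    induction n with
    | zero => exact hx₀C
    | succ n ih => exact hxs_succ n ▸ hnextC _ ih
  have hmono : Monotone xs := monotone_nat_of_le_succ fun n => hxs_succ n ▸ hxnext _ (hxsC n)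
  set X := ZFSet.sep (fun t => ∃ n, t ∈ xs n) lamZ
  have hXC : X ∈ C := hC.sep_mem_of_monotone hℵ hxsC hmono
  have hxsX (n : ℕ) : xs n ⊆ X := fun t ht => mem_sep.2 ⟨(hC.1 (hxsC n)).1 ht, n, ht⟩
  refine ⟨X, ⟨hC.1 hXC, uncountableCardCofOmega_of_cardinal_seq (fun n => ν (xs n))
    (fun n => hν _ (hxsC n)) (hνℵ _ (hxsC 0)) (fun n => ⟨?_, fun t ht => ?_⟩) ?_⟩, hXC⟩
  · exact mem_inter.2 ⟨hxsX (n + 1) (hxs_succ n ▸ hνmem _ (hxsC n)), hνκ _ (hxsC n)⟩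
  · exact mem_inter.2 ⟨hxsX (n + 1) (hxs_succ n ▸ hνsub _ (hxsC n) ht),
      hκ.1.1.1 _ (hνκ _ (hxsC n)) ht⟩
  · intro t ht
    obtain ⟨htX, htκ⟩ := mem_inter.1 ht
    obtain ⟨-, n, htn⟩ := mem_sep.1 htX
    exact ⟨n, hxν _ (hxsC n) (mem_inter.2 ⟨htn, htκ⟩)⟩

/-- If `κ` is weakly inaccessible and `λ ≥ κ` then
`A = {x ∈ P_κλ : x ∩ κ` is an uncountable cardinal of cofinality `ω}` is stationary. -/
theorem cofinality_omega_set_stationary (κZ lamZ : ZFSet.{u})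
    (hκord : IsOrd κZ) (hκ : WeaklyInaccZ κZ) (hlamord : IsOrd lamZ) (hκlam : κZ ⊆ lamZ) :
    ∀ C : Set ZFSet.{u}, chainClub κZ lamZ C →
      ({x | x ∈ PKL κZ lamZ ∧ UncountableCardCofOmega (x ∩ κZ)} ∩ C).Nonempty :=
  cofinality_omega_set_stationary_general κZ lamZ hκ hκlam

end TwoCardinalWC
end
end

section
/- Suppose κ is inaccessible and λ ≥ κ. If X ⊆ V_κ(κ, λ) and |X| < κ, then there exists x ∈ P_κλ such that X ⊆ V_{κ_x}(κ_x, x). -/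
universe u

open Cardinal FirstOrder

noncomputable section

namespace TwoCardinalWC

/-! Each `a ∈ V_κ(κ, λ)` has a support: a set `s ⊆ λ` with `|s| < κ` and a bound
`μ < κ` such that `a ∈ V_ν(ν, B)` for every regular `ν ≥ μ` and every `B ⊇ s`. This goes by
induction along the hierarchy, merging the supports of the `< κ` members of `a` by regularity
of `κ`; `μ` must exceed `|a|`, which is where `κ` being a limit cardinal enters. After merging
the supports over `X`, pad `s` with `ν` ordinals below `κ`, for a successor cardinal `ν < κ`
above `μ` and `|s|`: the resulting `x` has `κ_x = |x| = ν`, a regular cardinal. -/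

section Hierarchy

variable {δ : Cardinal.{u + 1}} {A : Set ZFSet.{u}}

theorem Vh_zero : Vh δ A 0 = A :=
  Ordinal.limitRecOn_zero _ _ _

theorem Vh_succ (β : Ordinal.{u + 1}) :
    Vh δ A (Order.succ β) = {y | y.toSet ⊆ Vh δ A β ∧ cardZ y < δ} ∪ Vh δ A β := by
  rw [Order.succ_eq_add_one]
  exact Ordinal.limitRecOn_add_one _ _ _ _

theorem mem_Vh_of_isSuccLimit {o : Ordinal.{u + 1}} (ho : Order.IsSuccLimit o) {a : ZFSet.{u}} :
    a ∈ Vh δ A o ↔ ∃ β < o, a ∈ Vh δ A β := by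
  rw [Vh, Ordinal.limitRecOn_limit _ _ _ _ ho]
  exact exists_congr fun _ => exists_prop

theorem Vh_mono : Monotone (Vh δ A) := by
  intro β γ
  induction γ using Ordinal.limitRecOn generalizing β with
  | zero => intro h; rw [nonpos_iff_eq_zero.1 h]
  | add_one γ ih =>
    intro h
    rcases (Order.le_succ_iff_eq_or_le.1 (Order.succ_eq_add_one γ ▸ h)) with rfl | h
    · rfl
    · rw [← Order.succ_eq_add_one, Vh_succ]
      exact (ih h).trans Set.subset_union_right
  | limit γ hγ _ =>
    intro h a ha
    rcases h.eq_or_lt with rfl | h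
    · exact ha
    · exact (mem_Vh_of_isSuccLimit hγ).2 ⟨β, h, ha⟩

theorem subset_Vh (β : Ordinal.{u + 1}) : A ⊆ Vh δ A β :=
  Vh_zero.symm.subset.trans (Vh_mono (zero_le : 0 ≤ β))

theorem mem_Vh_ord_of_subset {ν : Cardinal.{u + 1}} (hν : ν.IsRegular) {a : ZFSet.{u}}
    (ha : a.toSet ⊆ Vh ν A ν.ord) (hcard : cardZ a < ν) : a ∈ Vh ν A ν.ord := by
  have hlim : Order.IsSuccLimit ν.ord := Cardinal.isSuccLimit_ord hν.aleph0_le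
  choose γ hγ hbγ using fun b : a.toSet => (mem_Vh_of_isSuccLimit hlim).1 (ha b.2)
  have hsup : ⨆ b, γ b < ν.ord :=
    Ordinal.iSup_lt_of_lt_cof (by rwa [hν.cof_ord]) hγ
  refine (mem_Vh_of_isSuccLimit hlim).2 ⟨_, hlim.succ_lt hsup, ?_⟩
  rw [Vh_succ]
  exact Or.inl ⟨fun b hb => Vh_mono (Ordinal.le_iSup γ ⟨b, hb⟩) (hbγ ⟨b, hb⟩), hcard⟩

def IsSupport (s : Set ZFSet.{u}) (μ : Cardinal.{u + 1}) (a : ZFSet.{u}) : Prop :=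
  ∀ (B : Set ZFSet.{u}) (ν : Cardinal.{u + 1}), s ⊆ B → μ ≤ ν → ν.IsRegular →
    a ∈ Vh ν B ν.ord

theorem isSupport_singleton (a : ZFSet.{u}) : IsSupport {a} 0 a :=
  fun _ _ hB _ _ => subset_Vh _ (hB rfl)

theorem IsSupport.mono {s t : Set ZFSet.{u}} {μ μ' : Cardinal.{u + 1}} {a : ZFSet.{u}}
    (h : IsSupport s μ a) (hst : s ⊆ t) (hμ : μ ≤ μ') : IsSupport t μ' a :=
  fun B ν htB hμν hν => h B ν (hst.trans htB) (hμ.trans hμν) hν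

theorem IsSupport.of_forall_mem {s : Set ZFSet.{u}} {μ : Cardinal.{u + 1}} {a : ZFSet.{u}}
    (h : ∀ b ∈ a.toSet, IsSupport s μ b) : IsSupport s (μ ⊔ Order.succ (cardZ a)) a :=
  fun B ν hsB hμν hν =>
    mem_Vh_ord_of_subset hν (fun b hb => h b hb B ν hsB (le_sup_left.trans hμν) hν)
      (Order.succ_le_iff.1 (le_sup_right.trans hμν))

theorem exists_common_support (hδ : δ.IsRegular) {X : Set ZFSet.{u}} (hX : #X < δ)
    (h : ∀ a ∈ X, ∃ s ⊆ A, #s < δ ∧ ∃ μ < δ, IsSupport s μ a) :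
    ∃ s ⊆ A, #s < δ ∧ ∃ μ < δ, ∀ a ∈ X, IsSupport s μ a := by
  choose s hsA hs μ hμ hsupp using h
  refine ⟨⋃ a ∈ X, s a ‹_›, Set.iUnion₂_subset hsA,
    (Cardinal.card_biUnion_lt_iff_forall_of_isRegular hδ hX).2 hs, ⨆ a : X, μ a a.2,
    Cardinal.iSup_lt_of_lt_cof_ord (by rwa [hδ.cof_ord]) fun a => hμ a a.2, fun a ha => ?_⟩
  exact (hsupp a ha).mono (Set.subset_iUnion₂ (s := fun a ha => s a ha) a ha)
    (le_ciSup Cardinal.bddAbove_of_small (⟨a, ha⟩ : X))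

theorem exists_small_support (hreg : δ.IsRegular) (hlim : Order.IsSuccLimit δ)
    {β : Ordinal.{u + 1}} {a : ZFSet.{u}} (ha : a ∈ Vh δ A β) :
    ∃ s ⊆ A, #s < δ ∧ ∃ μ < δ, IsSupport s μ a := by
  induction β using Ordinal.limitRecOn generalizing a with
  | zero =>
    rw [Vh_zero] at ha
    exact ⟨{a}, Set.singleton_subset_iff.2 ha, by simpa using hreg.nat_lt 1, 0, hreg.pos,
      isSupport_singleton a⟩
  | add_one β ih =>
    rw [← Order.succ_eq_add_one, Vh_succ] at ha
    rcases ha with ⟨hsub, hcard⟩ | ha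
    · obtain ⟨s, hsA, hs, μ, hμ, hsupp⟩ :=
        exists_common_support hreg hcard fun b hb => ih (hsub hb)
      exact ⟨s, hsA, hs, _, max_lt hμ (hlim.succ_lt hcard), IsSupport.of_forall_mem hsupp⟩
    · exact ih ha
  | limit β hβ ih =>
    obtain ⟨γ, hγ, ha⟩ := (mem_Vh_of_isSuccLimit hβ).1 ha
    exact ih γ hγ ha

end Hierarchy

theorem exists_toSet_eq_of_subset {y : ZFSet.{u}} {t : Set ZFSet.{u}} (ht : t ⊆ y.toSet) :
    ∃ x ⊆ y, x.toSet = t :=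
  ⟨y.sep (· ∈ t), ZFSet.sep_subset, Set.ext fun _ =>
    ZFSet.mem_sep.trans ⟨And.right, fun hz => ⟨ht hz, hz⟩⟩⟩

theorem exists_superset_kap_eq {κZ lamZ : ZFSet.{u}} (hκlam : κZ ⊆ lamZ)
    {s : Set ZFSet.{u}} (hs : s ⊆ lamZ.toSet) {ν : Cardinal.{u + 1}} (hν : ℵ₀ ≤ ν)
    (hsν : #s ≤ ν) (hνκ : ν ≤ cardZ κZ) :
    ∃ x ⊆ lamZ, s ⊆ x.toSet ∧ cardZ x = ν ∧ kap κZ x = ν := by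
  obtain ⟨T, hTκ, hT⟩ := Cardinal.le_mk_iff_exists_subset.1 hνκ
  obtain ⟨x, hxLam, hx⟩ := exists_toSet_eq_of_subset (t := s ∪ T) <|
    Set.union_subset hs (hTκ.trans fun _ hz => hκlam hz)
  have hTx : T ⊆ (x ∩ κZ).toSet := fun z hz =>
    ZFSet.mem_inter.2 ⟨show z ∈ x.toSet from hx ▸ Or.inr hz, hTκ hz⟩
  have hkap_le : kap κZ x ≤ cardZ x :=
    Cardinal.mk_le_mk_of_subset fun z hz => (ZFSet.mem_inter.1 hz).1
  have hx_le : cardZ x ≤ ν := by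
    calc cardZ x = #(s ∪ T : Set ZFSet) := by rw [cardZ, hx]
      _ ≤ #s + #T := Cardinal.mk_union_le _ _
      _ ≤ ν := by rw [hT]; exact Cardinal.add_le_of_le hν hsν le_rfl
  have hν_le : ν ≤ kap κZ x := hT ▸ Cardinal.mk_le_mk_of_subset hTx
  exact ⟨x, hxLam, hx ▸ Set.subset_union_left, le_antisymm hx_le (hν_le.trans hkap_le),
    le_antisymm (hkap_le.trans hx_le) hν_le⟩

theorem small_subset_of_hierarchy_covered_general (κZ lamZ : ZFSet.{u})
    (hκ : InaccZ κZ) (hκlam : κZ ⊆ lamZ)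
    (X : Set ZFSet.{u}) (hX : X ⊆ Vh (cardZ κZ) lamZ.toSet ((cardZ κZ).ord))
    (hXcard : #↥X < cardZ κZ) :
    ∃ x ∈ PKL κZ lamZ, X ⊆ Vh (kap κZ x) x.toSet ((kap κZ x).ord) := by
  obtain ⟨-, hinacc⟩ := hκ
  obtain ⟨s, hsLam, hs, μ, hμ, hsupp⟩ := exists_common_support hinacc.isRegular hXcard
    fun a ha => exists_small_support hinacc.isRegular hinacc.isSuccLimit (hX ha)
  set ν := Order.succ (μ ⊔ #s ⊔ ℵ₀)
  have hν : ν < cardZ κZ :=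
    hinacc.isSuccLimit.succ_lt (max_lt (max_lt hμ hs) hinacc.aleph0_lt)
  have hνreg : ν.IsRegular := Cardinal.isRegular_succ le_sup_right
  obtain ⟨x, hxLam, hsx, hxcard, hkap⟩ := exists_superset_kap_eq hκlam hsLam hνreg.aleph0_le
    ((le_sup_right.trans le_sup_left).trans (Order.le_succ _)) hν.le
  refine ⟨x, ⟨hxLam, hxcard ▸ hν⟩, fun a ha => ?_⟩
  rw [hkap]
  exact hsupp a ha _ _ hsx ((le_sup_left.trans le_sup_left).trans (Order.le_succ _)) hνreg

/-- If `κ` is inaccessible, `λ ≥ κ`, `X ⊆ V_κ(κ, λ)` and `|X| < κ`,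
then there is `x ∈ P_κλ` with `X ⊆ V_{κ_x}(κ_x, x)`. -/
theorem small_subset_of_hierarchy_covered (κZ lamZ : ZFSet.{u})
    (hκ : InaccZ κZ) (hlamord : IsOrd lamZ) (hκlam : κZ ⊆ lamZ)
    (X : Set ZFSet.{u}) (hX : X ⊆ Vh (cardZ κZ) lamZ.toSet ((cardZ κZ).ord))
    (hXcard : #↥X < cardZ κZ) :
    ∃ x ∈ PKL κZ lamZ, X ⊆ Vh (kap κZ x) x.toSet ((kap κZ x).ord) :=
  small_subset_of_hierarchy_covered_general κZ lamZ hκ hκlam X hX hXcard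

end TwoCardinalWC
end
end
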